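/- arXiv:1707.05101 — 6 statements merged into one kernel-verified Lean document; each statement's English description precedes it below -/
import Mathlib

section
/- Let (γ_t)_{t≥1} be a sequence of positive real numbers that is strictly decreasing (γ_{t+1} < γ_t for all t ≥ 1) and geometrically concave. Then for every κ > 0 there exists r ∈ ℕ such that for every t ≥ 1: γ_t − ∑_{s=t+r}^∞ γ_s > 0 and (∑_{s=t+r}^∞ γ_s)/(γ_t − ∑_{s=t+r}^∞ γ_s) < κ. -/
/-- If `(γ_t)_{t ≥ 1}` is a positive, strictly decreasing,
geometrically concave sequence, then for every `κ > 0` there exists `r ∈ ℕ` such that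
for every `t ≥ 1`, `γ_t - ∑_{s=t+r}^∞ γ_s > 0` and
`(∑_{s=t+r}^∞ γ_s)/(γ_t - ∑_{s=t+r}^∞ γ_s) < κ`. -/
theorem stmt_1 (γ : ℕ → ℝ)
    (hpos : ∀ t, 1 ≤ t → 0 < γ t)
    (hdec : ∀ t, 1 ≤ t → γ (t + 1) < γ t)
    (hconc : ∀ t, 1 ≤ t → γ (t + 1) / γ t ≥ γ (t + 2) / γ (t + 1)) :
    ∀ κ : ℝ, 0 < κ → ∃ r : ℕ, ∀ t, 1 ≤ t →
      0 < γ t - ∑' s : ℕ, γ (t + r + s) ∧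
      (∑' s : ℕ, γ (t + r + s)) / (γ t - ∑' s : ℕ, γ (t + r + s)) < κ := by
  intro κ hκ
  set q : ℝ := γ 2 / γ 1 with hqdef
  have h1 := hpos 1 le_rfl
  have h2 := hpos 2 (by norm_num)
  have hq0 : 0 < q := div_pos h2 h1
  have hq1 : q < 1 := (div_lt_one h1).2 (hdec 1 le_rfl)
  have hratio : ∀ t, 1 ≤ t → γ (t + 1) / γ t ≤ q := by
    intro t ht
    induction t with
    | zero => omega
    | succ n ih =>
      rcases Nat.lt_or_ge 1 (n + 1) with h | h
      · have hn : 1 ≤ n := by omega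
        calc γ (n + 1 + 1) / γ (n + 1) ≤ γ (n + 1) / γ n := hconc n hn
          _ ≤ q := ih hn
      · have hn0 : n = 0 := by omega
        subst hn0
        norm_num [hqdef]
  clear_value q
  have hstep : ∀ t, 1 ≤ t → γ (t + 1) ≤ q * γ t := by
    intro t ht
    exact (div_le_iff₀ (hpos t ht)).1 (hratio t ht)
  have hpow : ∀ t, 1 ≤ t → ∀ s, γ (t + s) ≤ q ^ s * γ t := by
    intro t ht s
    induction s with
    | zero => simp
    | succ m ih =>
      have hts : 1 ≤ t + m := by omega
      calc γ (t + (m + 1)) = γ (t + m + 1) := by ring_nf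
        _ ≤ q * γ (t + m) := hstep _ hts
        _ ≤ q * (q ^ m * γ t) := by nlinarith
        _ = q ^ (m + 1) * γ t := by ring
  have hsum : ∀ t, 1 ≤ t → Summable (fun s => γ (t + s)) := by
    intro t ht
    refine Summable.of_nonneg_of_le (fun s => (hpos _ (by omega)).le)
      (fun s => hpow t ht s) ?_
    exact (summable_geometric_of_lt_one hq0.le hq1).mul_right (γ t)
  have htsum : ∀ t, 1 ≤ t → ∑' s, γ (t + s) ≤ (1 - q)⁻¹ * γ t := by
    intro t ht
    have := Summable.tsum_le_tsum (hpow t ht) (hsum t ht)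
      ((summable_geometric_of_lt_one hq0.le hq1).mul_right (γ t))
    calc ∑' s, γ (t + s) ≤ ∑' s : ℕ, q ^ s * γ t := this
      _ = (∑' s : ℕ, q ^ s) * γ t := tsum_mul_right
      _ = (1 - q)⁻¹ * γ t := by rw [tsum_geometric_of_lt_one hq0.le hq1]
  have hεpos : 0 < (1 - q) * (κ / (1 + κ)) := by
    apply mul_pos (by linarith)
    positivity
  obtain ⟨r, hr⟩ := exists_pow_lt_of_lt_one hεpos hq1
  refine ⟨r, fun t ht => ?_⟩
  have htr : 1 ≤ t + r := by omega
  set S := ∑' s : ℕ, γ (t + r + s) with hS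
  have hSnn : 0 ≤ S := tsum_nonneg fun s => (hpos _ (by omega)).le
  have hbound : S < κ / (1 + κ) * γ t := by
    have h3 : S ≤ (1 - q)⁻¹ * γ (t + r) := htsum (t + r) htr
    have h4 : γ (t + r) ≤ q ^ r * γ t := hpow t ht r
    have h5 : q ^ r * γ t < (1 - q) * (κ / (1 + κ)) * γ t := by
      apply mul_lt_mul_of_pos_right hr (hpos t ht)
    have h6 : (0:ℝ) < (1 - q)⁻¹ := by
      apply inv_pos.2; linarith
    have h7 : (1 - q)⁻¹ * γ (t + r) ≤ (1 - q)⁻¹ * (q ^ r * γ t) := by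
      nlinarith
    have h8 : (1 - q)⁻¹ * (q ^ r * γ t) < (1 - q)⁻¹ * ((1 - q) * (κ / (1 + κ)) * γ t) := by
      nlinarith
    have h9 : (1 - q)⁻¹ * ((1 - q) * (κ / (1 + κ)) * γ t) = κ / (1 + κ) * γ t := by
      have hne : (1 : ℝ) - q ≠ 0 := by linarith
      rw [show (1 - q) * (κ / (1 + κ)) * γ t = (1 - q) * (κ / (1 + κ) * γ t) by ring,
        ← mul_assoc, inv_mul_cancel₀ hne, one_mul]
    linarith
  have hγt : 0 < γ t := hpos t ht
  have hfrac : κ / (1 + κ) < 1 := by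
    rw [div_lt_one (by linarith)]; linarith
  have hden : 0 < γ t - S := by nlinarith
  refine ⟨hden, ?_⟩
  rw [div_lt_iff₀ hden]
  have h10 : 0 < 1 + κ := by linarith
  have h11 : S * (1 + κ) < κ * γ t := by
    have := mul_lt_mul_of_pos_right hbound h10
    calc S * (1 + κ) < κ / (1 + κ) * γ t * (1 + κ) := this
      _ = κ * γ t := by field_simp
  nlinarith
end

section
/- Let γ ∈ (0,1) and r ∈ ℕ satisfy γ^r < 1 − γ² (equivalently 1 − γ² − γ^r > 0). Suppose v, p, p′ ∈ ℝ satisfy (v − p) + γ·(v − p′) < (γ^r/(1−γ))·(v − p). Then v − p′ < η_{r,γ}·(p′ − p), where η_{r,γ} := (γ^r + γ − 1)/(1 − γ² − γ^r). -/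
/-- Analytic core of the rejection bound for the pre-transformed
algorithm: if `γ ∈ (0,1)`, `r ∈ ℕ` with `γ^r < 1 - γ²`, and
`(v - p) + γ(v - p') < (γ^r/(1-γ))(v - p)`, then
`v - p' < η_{r,γ}·(p' - p)` where `η_{r,γ} = (γ^r + γ - 1)/(1 - γ² - γ^r)`. -/
theorem stmt_7 (γ : ℝ) (hγ0 : 0 < γ) (hγ1 : γ < 1)
    (r : ℕ) (hr : γ ^ r < 1 - γ ^ 2)
    (v p p' : ℝ)
    (h : (v - p) + γ * (v - p') < γ ^ r / (1 - γ) * (v - p)) :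
    v - p' < (γ ^ r + γ - 1) / (1 - γ ^ 2 - γ ^ r) * (p' - p) := by
  have h1 : (0:ℝ) < 1 - γ := by linarith
  have h2 : (0:ℝ) < 1 - γ ^ 2 - γ ^ r := by linarith
  rw [div_mul_eq_mul_div, lt_div_iff₀ h2]
  have h' : (1 - γ) * ((v - p) + γ * (v - p')) < γ ^ r * (v - p) := by
    have := mul_lt_mul_of_pos_left h h1
    calc (1 - γ) * ((v - p) + γ * (v - p')) < (1 - γ) * (γ ^ r / (1 - γ) * (v - p)) := this
      _ = γ ^ r * (v - p) := by field_simp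
  nlinarith [h']
end

section
/- Let γ ∈ ((√5−1)/2, 1) (so that γ² + γ − 1 > 0) and let κ > (1−γ)/(γ²+γ−1). Set A := 1 + κγ/(1+κ) and let r := ⌈log_γ((1−γ)·A)⌉ be the least integer ≥ log_γ((1−γ)A). Then r ≥ 1, γ^r < 1 − γ² (so 1 − γ² − γ^r > 0), and η_{r,γ} := (γ^r + γ − 1)/(1 − γ² − γ^r) ≤ κ. -/
/-- Let `γ ∈ ((√5-1)/2, 1)` (so `γ² + γ - 1 > 0`) and
`κ > (1-γ)/(γ²+γ-1)`. With `A := 1 + κγ/(1+κ)` and `r := ⌈log_γ((1-γ)A)⌉`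
(the least integer greater than or equal to `log_γ((1-γ)A)`), we have `r ≥ 1`,
`γ^r < 1 - γ²`, and `η_{r,γ} = (γ^r + γ - 1)/(1 - γ² - γ^r) ≤ κ`. -/
theorem stmt_9 (γ κ : ℝ)
    (hγ1 : (Real.sqrt 5 - 1) / 2 < γ) (hγ2 : γ < 1)
    (hκ : (1 - γ) / (γ ^ 2 + γ - 1) < κ) :
    γ ^ 2 + γ - 1 > 0 ∧
    (let A : ℝ := 1 + κ * γ / (1 + κ)
     let r : ℤ := ⌈Real.logb γ ((1 - γ) * A)⌉
     1 ≤ r ∧ γ ^ r < 1 - γ ^ 2 ∧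
       (γ ^ r + γ - 1) / (1 - γ ^ 2 - γ ^ r) ≤ κ) := by
  have hs : Real.sqrt 5 ^ 2 = 5 := Real.sq_sqrt (by norm_num)
  have hsnn : (0:ℝ) ≤ Real.sqrt 5 := Real.sqrt_nonneg 5
  have hγ0 : 0 < γ := by nlinarith
  have hq : γ ^ 2 + γ - 1 > 0 := by nlinarith
  refine ⟨hq, ?_⟩
  intro A r
  have hκ0 : 0 < κ := lt_trans (div_pos (by linarith) hq) hκ
  have h1κ : 0 < 1 + κ := by linarith
  have hA1 : 1 < A := by
    have : 0 < κ * γ / (1 + κ) := div_pos (mul_pos hκ0 hγ0) h1κ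
    simp only [A]; linarith
  have hAγ : A < 1 + γ := by
    have : κ * γ / (1 + κ) < γ := by
      rw [div_lt_iff₀ h1κ]; nlinarith
    simp only [A]; linarith
  have hx0 : 0 < (1 - γ) * A := mul_pos (by linarith) (by linarith)
  have hx1 : (1 - γ) * A < 1 - γ ^ 2 := by nlinarith
  have hx1' : (1 - γ) * A < 1 := by nlinarith
  -- r ≥ 1
  have hlogpos : 0 < Real.logb γ ((1 - γ) * A) :=
    Real.logb_pos_of_base_lt_one hγ0 hγ2 hx0 hx1'
  have hr1 : 1 ≤ r := Int.ceil_pos.mpr hlogpos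
  -- γ ^ r ≤ (1-γ)A
  have hrle : Real.logb γ ((1 - γ) * A) ≤ (r : ℝ) := Int.le_ceil _
  have hkey : γ ^ r ≤ (1 - γ) * A := by
    have h1 : γ ^ (r : ℝ) ≤ γ ^ Real.logb γ ((1 - γ) * A) :=
      Real.rpow_le_rpow_of_exponent_ge hγ0 (le_of_lt hγ2) hrle
    rw [Real.rpow_logb hγ0 (ne_of_lt hγ2) hx0] at h1
    rwa [Real.rpow_intCast] at h1
  have hlt : γ ^ r < 1 - γ ^ 2 := lt_of_le_of_lt hkey hx1
  refine ⟨hr1, hlt, ?_⟩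
  rw [div_le_iff₀ (by linarith)]
  have hA : A * (1 + κ) = 1 + κ + κ * γ := by
    simp only [A]; field_simp
  nlinarith [mul_le_mul_of_nonneg_right hkey (le_of_lt h1κ)]
end

section
/- Let (γ_t)_{t≥1} be a discount sequence with γ_t > 0 for all t and ∑_{t=1}^∞ γ_t < ∞, and let A : List Bool → ℝ be a weakly consistent pricing algorithm whose first price p₁ := A([]) lies in (0,1). Suppose there exists a strategy ã : ℕ → Bool whose price sequence p̃_t := p_t(ã) satisfies: there exist natural numbers t̃₀ ≤ t̃₁ with p̃_{t̃₁+1} < p̃_{t̃₀} < p₁. Then there exist a valuation v ∈ [0,1], a constant c > 0, and T₀ ∈ ℕ such that for every T ≥ T₀ and every strategy a that is optimal for (T, A, v, γ), one has Reg(T, A, v, a) ≥ c·T. -/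
/-- The price offered at round `t` (rounds indexed from 1) by the
horizon-independent pricing algorithm `A : List Bool → ℝ` against the buyer
strategy `a : ℕ → Bool`: it is `A` applied to the history `[a 1, …, a (t-1)]`. -/
noncomputable def price (A : List Bool → ℝ) (a : ℕ → Bool) (t : ℕ) : ℝ :=
  A (List.ofFn (fun i : Fin (t - 1) => a (i + 1)))

/-- The buyer's `γ`-discounted surplus over horizon `T`. -/
noncomputable def Sur (γ : ℕ → ℝ) (T : ℕ) (A : List Bool → ℝ) (v : ℝ)
    (a : ℕ → Bool) : ℝ :=
  ∑ t ∈ Finset.Icc 1 T, γ t * (if a t then v - price A a t else 0)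

/-- The seller's regret over horizon `T`. -/
noncomputable def Reg (T : ℕ) (A : List Bool → ℝ) (v : ℝ) (a : ℕ → Bool) : ℝ :=
  ∑ t ∈ Finset.Icc 1 T, (v - (if a t then price A a t else 0))

/-- Weak consistency: after a price change following an acceptance all future
prices are at least the current one, and after a price change following a
rejection all future prices are at most the current one. -/
def WeaklyConsistent (A : List Bool → ℝ) : Prop :=
  ∀ s u : List Bool,
    (A (s ++ [true]) ≠ A s → A (s ++ [true] ++ u) ≥ A s) ∧
    (A (s ++ [false]) ≠ A s → A (s ++ [false] ++ u) ≤ A s)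

/-!
Weak consistency forces every buyer path to stay on one side of the first price `p₁ = A []`:
the first price change along the path is an acceptance (then all later prices are `≥ p₁`)
or a rejection (then all later prices are `≤ p₁`). The same argument applied at the round
`t̃₀` of the double drop yields a history `s` below which every price is at most
`q = p̃_{t̃₀} < p₁`. For a valuation `v = p₁ + δ` slightly above `p₁`, going to `s` and
accepting earns surplus at least `γ_{|s|+1} (v - q)`, whereas a path with prices `≥ p₁` earns
at most `δ ∑ γ_t`, which is smaller once `δ` is small. So an optimal buyer only ever sees
prices `≤ p₁ = v - δ`, and loses at least `δ` of regret in every round.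
-/

def history (a : ℕ → Bool) (n : ℕ) : List Bool := List.ofFn fun i : Fin n => a (i + 1)

theorem price_eq_history (A : List Bool → ℝ) (a : ℕ → Bool) (t : ℕ) :
    price A a t = A (history a (t - 1)) := rfl

theorem history_succ (a : ℕ → Bool) (n : ℕ) : history a (n + 1) = history a n ++ [a (n + 1)] :=
  List.ofFn_succ_last

theorem history_prefix (a : ℕ → Bool) {m n : ℕ} (h : m ≤ n) : history a m <+: history a n := by
  induction n, h using Nat.le_induction with
  | base => exact List.prefix_refl _
  | succ n _ ih => exact ih.trans (history_succ a n ▸ List.prefix_append _ _)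

theorem history_congr {a b : ℕ → Bool} {n : ℕ} (h : ∀ t, 1 ≤ t → t ≤ n → a t = b t) :
    history a n = history b n :=
  congrArg List.ofFn <| funext fun i => h _ (by omega) (by omega)

namespace WeaklyConsistent

variable {A : List Bool → ℝ}

theorem le_or_ge_of_ne (hWC : WeaklyConsistent A) {s : List Bool} {b : Bool}
    (hne : A (s ++ [b]) ≠ A s) :
    (∀ u, A s ≤ A (s ++ [b] ++ u)) ∨ (∀ u, A (s ++ [b] ++ u) ≤ A s) := by
  cases b
  · exact .inr fun u => (hWC s u).2 hne
  · exact .inl fun u => (hWC s u).1 hne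

theorem exists_first_change (hWC : WeaklyConsistent A) (a : ℕ → Bool) {m n : ℕ} (hmn : m ≤ n)
    (hne : A (history a n) ≠ A (history a m)) :
    ∃ L, m < L ∧ L ≤ n ∧ (∀ j, m ≤ j → j < L → A (history a j) = A (history a m)) ∧
      ((∀ u, A (history a m) ≤ A (history a L ++ u)) ∨
        (∀ u, A (history a L ++ u) ≤ A (history a m))) := by
  classical
  have hS : ∃ k, m ≤ k ∧ A (history a k) ≠ A (history a m) := ⟨n, hmn, hne⟩
  obtain ⟨hmL, hneL⟩ := Nat.find_spec hS
  have hconst : ∀ j, m ≤ j → j < Nat.find hS → A (history a j) = A (history a m) :=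
    fun j hmj hjL => not_not.1 fun h => Nat.find_min hS hjL ⟨hmj, h⟩
  have hmL' : m < Nat.find hS := hmL.lt_of_ne fun h => hneL (h ▸ rfl)
  obtain ⟨k, hk⟩ : ∃ k, Nat.find hS = k + 1 := ⟨Nat.find hS - 1, by omega⟩
  have hAk : A (history a k) = A (history a m) := hconst k (by omega) (by omega)
  have hstep : history a (Nat.find hS) = history a k ++ [a (k + 1)] := hk ▸ history_succ a k
  have hchange : A (history a k ++ [a (k + 1)]) ≠ A (history a k) := by
    rw [← hstep, hAk]
    exact hneL
  refine ⟨Nat.find hS, hmL', Nat.find_min' hS ⟨hmn, hne⟩, hconst, ?_⟩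
  rw [hstep, ← hAk]
  exact hWC.le_or_ge_of_ne hchange

theorem forall_ge_or_forall_le (hWC : WeaklyConsistent A) (a : ℕ → Bool) :
    (∀ t, A [] ≤ price A a t) ∨ (∀ t, price A a t ≤ A []) := by
  by_cases hS : ∃ n, A (history a n) ≠ A []
  · obtain ⟨n, hn⟩ := hS
    obtain ⟨L, -, -, hconst, hside⟩ := hWC.exists_first_change a (Nat.zero_le n) hn
    refine hside.imp (fun h t => ?_) (fun h t => ?_) <;> rcases lt_or_ge (t - 1) L with hlt | hge
    · exact (hconst _ (Nat.zero_le _) hlt).ge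
    · obtain ⟨u, hu⟩ := history_prefix a hge
      rw [price_eq_history, ← hu]
      exact h u
    · exact (hconst _ (Nat.zero_le _) hlt).le
    · obtain ⟨u, hu⟩ := history_prefix a hge
      rw [price_eq_history, ← hu]
      exact h u
  · push Not at hS
    exact .inl fun t => (hS (t - 1)).ge

theorem forall_price_le_of_price_lt (hWC : WeaklyConsistent A) {a : ℕ → Bool} {t : ℕ}
    (h : price A a t < A []) : ∀ n, price A a n ≤ A [] :=
  (hWC.forall_ge_or_forall_le a).resolve_left fun hge => (hge t).not_gt h

theorem exists_history_forall_le (hWC : WeaklyConsistent A) (a : ℕ → Bool) {m n : ℕ}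
    (hmn : m ≤ n) (hlt : A (history a n) < A (history a m)) :
    ∃ L, ∀ u, A (history a L ++ u) ≤ A (history a m) := by
  obtain ⟨L, -, hLn, -, hside⟩ := hWC.exists_first_change a hmn hlt.ne
  refine ⟨L, hside.resolve_left fun h => ?_⟩
  obtain ⟨u, hu⟩ := history_prefix a hLn
  exact (h u).not_gt (hu ▸ hlt)

end WeaklyConsistent

section Surplus

variable {γ : ℕ → ℝ} {A : List Bool → ℝ} {v δ : ℝ} {T : ℕ}

theorem sum_Icc_le_tsum (hγ : ∀ t, 1 ≤ t → 0 ≤ γ t) (hsum : Summable fun t => γ (t + 1))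
    (T : ℕ) : ∑ t ∈ Finset.Icc 1 T, γ t ≤ ∑' t, γ (t + 1) := by
  have hshift : ∑ t ∈ Finset.Icc 1 T, γ t = ∑ t ∈ Finset.range T, γ (t + 1) := by
    rw [Finset.range_eq_Ico, Finset.sum_Ico_add' γ 0 T 1]
    rfl
  exact hshift ▸ hsum.sum_le_tsum _ fun t _ => hγ (t + 1) (Nat.le_add_left 1 t)

theorem Sur_le_of_forall_price_ge (hγ : ∀ t, 1 ≤ t → 0 ≤ γ t)
    (hsum : Summable fun t => γ (t + 1)) (hδ : 0 ≤ δ) {a : ℕ → Bool}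
    (h : ∀ t, v - δ ≤ price A a t) : Sur γ T A v a ≤ δ * ∑' t, γ (t + 1) :=
  calc Sur γ T A v a ≤ ∑ t ∈ Finset.Icc 1 T, γ t * δ := by
        refine Finset.sum_le_sum fun t ht => mul_le_mul_of_nonneg_left ?_ ?_
        · split_ifs
          · linarith [h t]
          · exact hδ
        · exact hγ t (Finset.mem_Icc.1 ht).1
    _ = (∑ t ∈ Finset.Icc 1 T, γ t) * δ := (Finset.sum_mul _ _ _).symm
    _ ≤ δ * ∑' t, γ (t + 1) := by
        rw [mul_comm]
        exact mul_le_mul_of_nonneg_left (sum_Icc_le_tsum hγ hsum T) hδ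

theorem mul_sub_price_le_Sur (hγ : ∀ t, 1 ≤ t → 0 ≤ γ t) {b : ℕ → Bool}
    (hb : ∀ t, price A b t ≤ v) {t : ℕ} (ht : t ∈ Finset.Icc 1 T) (hbt : b t = true) :
    γ t * (v - price A b t) ≤ Sur γ T A v b := by
  have hnonneg : ∀ s ∈ Finset.Icc 1 T, 0 ≤ γ s * (if b s then v - price A b s else 0) :=
    fun s hs => mul_nonneg (hγ s (Finset.mem_Icc.1 hs).1) (by split_ifs <;> linarith [hb s])
  have := Finset.single_le_sum hnonneg ht
  beta_reduce at this
  rwa [if_pos hbt] at this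

theorem mul_le_Reg {a : ℕ → Bool} (hδv : δ ≤ v) (h : ∀ t, price A a t ≤ v - δ) :
    δ * T ≤ Reg T A v a := by
  have := Finset.card_nsmul_le_sum (Finset.Icc 1 T) (fun t => v - if a t then price A a t else 0)
    δ fun t _ => by split_ifs <;> linarith [h t]
  rwa [Nat.card_Icc, Nat.add_sub_cancel, nsmul_eq_mul, mul_comm] at this

theorem WeaklyConsistent.forall_price_le_of_Sur_le (hWC : WeaklyConsistent A)
    (hγ : ∀ t, 1 ≤ t → 0 ≤ γ t) (hsum : Summable fun t => γ (t + 1)) {a b : ℕ → Bool} {t : ℕ}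
    (hb : ∀ n, price A b n ≤ v) (ht : t ∈ Finset.Icc 1 T) (hbt : b t = true) (hv : A [] ≤ v)
    (hgain : (v - A []) * ∑' n, γ (n + 1) < γ t * (v - price A b t))
    (hopt : Sur γ T A v b ≤ Sur γ T A v a) : ∀ n, price A a n ≤ A [] :=
  (hWC.forall_ge_or_forall_le a).resolve_left fun hge =>
    (Sur_le_of_forall_price_ge hγ hsum (sub_nonneg.2 hv) fun n => by linarith [hge n]).not_gt
      (hgain.trans_le ((mul_sub_price_le_Sur hγ hb ht hbt).trans hopt))

end Surplus

theorem stmt_15_general (γ : ℕ → ℝ)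
    (hγpos : ∀ t, 1 ≤ t → 0 < γ t)
    (hγsum : Summable (fun t : ℕ => γ (t + 1)))
    (A : List Bool → ℝ) (hWC : WeaklyConsistent A)
    (hp1 : A [] ∈ Set.Ioo (0 : ℝ) 1)
    (atil : ℕ → Bool) (t0 t1 : ℕ) (ht01 : t0 ≤ t1)
    (hdrop1 : price A atil (t1 + 1) < price A atil t0)
    (hdrop2 : price A atil t0 < A []) :
    ∃ v ∈ Set.Icc (0 : ℝ) 1, ∃ c > (0 : ℝ), ∃ T₀ : ℕ,
      ∀ T : ℕ, T₀ ≤ T → ∀ a : ℕ → Bool,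
        (∀ b : ℕ → Bool, Sur γ T A v b ≤ Sur γ T A v a) →
        Reg T A v a ≥ c * T := by
  obtain ⟨hP0, hP1⟩ := hp1
  have hγ : ∀ t, 1 ≤ t → 0 ≤ γ t := fun t ht => (hγpos t ht).le
  obtain ⟨L, hL⟩ := hWC.exists_history_forall_le atil (show t0 - 1 ≤ t1 by omega) hdrop1
  let b : ℕ → Bool := fun t => if t ≤ L then atil t else true
  have hbq : price A b (L + 1) ≤ price A atil t0 := by
    rw [price_eq_history, Nat.add_sub_cancel, history_congr fun t _ ht => if_pos ht]
    have := hL []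
    rwa [List.append_nil] at this
  have hb : ∀ n, price A b n ≤ A [] := hWC.forall_price_le_of_price_lt (hbq.trans_lt hdrop2)
  set Γ := ∑' t, γ (t + 1)
  have hΓ : 0 < Γ :=
    (hγpos 1 le_rfl).trans_le (hγsum.le_tsum 0 fun t _ => hγ (t + 1) (Nat.le_add_left 1 t))
  have hγL : 0 < γ (L + 1) := hγpos (L + 1) (Nat.le_add_left 1 L)
  obtain ⟨δ, hδ, hδ1, hδΓ⟩ : ∃ δ > 0, δ ≤ 1 - A [] ∧
      δ * Γ ≤ (A [] - price A atil t0) * γ (L + 1) :=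
    ⟨_, lt_min (sub_pos.2 hP1) (by have := sub_pos.2 hdrop2; positivity),
      min_le_left _ _, (le_div_iff₀ hΓ).1 (min_le_right _ _)⟩
  have hgain : (A [] + δ - A []) * Γ < γ (L + 1) * (A [] + δ - price A b (L + 1)) := by
    rw [add_sub_cancel_left]
    nlinarith
  refine ⟨A [] + δ, ⟨by linarith, by linarith⟩, δ, hδ, L + 1, fun T hT a hopt => ?_⟩
  have ha := hWC.forall_price_le_of_Sur_le hγ hγsum (fun n => (hb n).trans (by linarith))
    (Finset.mem_Icc.2 ⟨Nat.le_add_left 1 L, hT⟩) (if_neg (by omega)) (by linarith) hgain (hopt b)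
  exact mul_le_Reg (by linarith) fun t => by linarith [ha t]

/-- A weakly consistent horizon-independent algorithm whose
price tree contains a path exhibiting a double price decrease below the first
price `p₁ ∈ (0,1)` has linear strategic regret: there is a valuation
`v ∈ [0,1]`, a constant `c > 0` and a round `T₀` such that every surplus-optimal
strategy for horizon `T ≥ T₀` incurs regret at least `c·T`. -/
theorem stmt_15 (γ : ℕ → ℝ)
    (hγpos : ∀ t, 1 ≤ t → 0 < γ t)
    (hγsum : Summable (fun t : ℕ => γ (t + 1)))
    (A : List Bool → ℝ) (hWC : WeaklyConsistent A)
    (hp1 : A [] ∈ Set.Ioo (0 : ℝ) 1)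
    (atil : ℕ → Bool) (t0 t1 : ℕ) (ht0 : 1 ≤ t0) (ht01 : t0 ≤ t1)
    (hdrop1 : price A atil (t1 + 1) < price A atil t0)
    (hdrop2 : price A atil t0 < A []) :
    ∃ v ∈ Set.Icc (0 : ℝ) 1, ∃ c > (0 : ℝ), ∃ T₀ : ℕ,
      ∀ T : ℕ, T₀ ≤ T → ∀ a : ℕ → Bool,
        (∀ b : ℕ → Bool, Sur γ T A v b ≤ Sur γ T A v a) →
        Reg T A v a ≥ c * T :=
  stmt_15_general γ hγpos hγsum A hWC hp1 atil t0 t1 ht01 hdrop1 hdrop2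
end

section
/- Let A : List Bool → ℝ be a right-consistent pricing algorithm and let q ∈ ℝ satisfy q ≤ A(s) for every history s (for instance q = inf{A(s) : s ∈ List Bool}). Then the transformed algorithm B := pre(q, A) is both right-consistent and weakly consistent, i.e.: (i) B(s ++ [true] ++ u) ≥ B(s) for all s, u; (ii) if B(s ++ [true]) ≠ B(s) then B(s ++ [true] ++ u) ≥ B(s) for all u; and (iii) if B(s ++ [false]) ≠ B(s) then B(s ++ [false] ++ u) ≤ B(s) for all u (in fact B(s ++ [false]) = B(s) always holds). -/
/-- Right consistency: prices never drop below the last accepted price. -/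
def RightConsistent (A : List Bool → ℝ) : Prop :=
  ∀ s u : List Bool, A (s ++ [true] ++ u) ≥ A s

/-- Auxiliary function for the `pre` transformation, scanning the (reversed)
history for the most recent acceptance. -/
noncomputable def preAux (q : ℝ) (A : List Bool → ℝ) : List Bool → ℝ
  | [] => q
  | b :: rest => if b then A rest.reverse else preAux q A rest

/-- The `pre` transformation: `pre q A s = q` if the history `s` contains no
acceptance, and otherwise `pre q A s = A [s 1, …, s (k-1)]` where `k` is the
largest index with `s k = true`. -/
noncomputable def pre (q : ℝ) (A : List Bool → ℝ) (s : List Bool) : ℝ :=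
  preAux q A s.reverse

/-- If `A` is right-consistent and `q ≤ A s` for every
history `s`, then `B := pre q A` is right-consistent and weakly consistent;
moreover `B (s ++ [false]) = B s` always holds. -/
theorem stmt_17 (A : List Bool → ℝ) (hA : RightConsistent A)
    (q : ℝ) (hq : ∀ s : List Bool, q ≤ A s) :
    (∀ s u : List Bool, pre q A (s ++ [true] ++ u) ≥ pre q A s) ∧
    (∀ s : List Bool, pre q A (s ++ [true]) ≠ pre q A s →
      ∀ u : List Bool, pre q A (s ++ [true] ++ u) ≥ pre q A s) ∧
    (∀ s : List Bool, pre q A (s ++ [false]) ≠ pre q A s →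
      ∀ u : List Bool, pre q A (s ++ [false] ++ u) ≤ pre q A s) ∧
    (∀ s : List Bool, pre q A (s ++ [false]) = pre q A s) := by
  have aux1 : ∀ l u : List Bool, preAux q A l ≤ A (l.reverse ++ u) := by
    intro l
    induction l with
    | nil => intro u; simpa [preAux] using hq u
    | cons b l ih =>
      intro u
      cases b with
      | true =>
        have := hA l.reverse u
        simpa [preAux, List.append_assoc] using this
      | false =>
        have := ih (false :: u)
        simpa [preAux, List.append_assoc] using this
  have aux2 : ∀ l t : List Bool, A t.reverse ≤ preAux q A (l ++ true :: t) := by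
    intro l
    induction l with
    | nil => intro t; simp [preAux]
    | cons b l ih =>
      intro t
      cases b with
      | true =>
        have := hA t.reverse l.reverse
        simpa [preAux, List.append_assoc] using this
      | false => simpa [preAux] using ih t
  have h1 : ∀ s u : List Bool, pre q A (s ++ [true] ++ u) ≥ pre q A s := by
    intro s u
    have h2 : A s ≤ preAux q A (u.reverse ++ true :: s.reverse) := by
      simpa using aux2 u.reverse s.reverse
    have h3 : preAux q A s.reverse ≤ A s := by
      simpa using aux1 s.reverse []
    have : (s ++ [true] ++ u).reverse = u.reverse ++ true :: s.reverse := by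
      simp
    calc pre q A s = preAux q A s.reverse := rfl
      _ ≤ A s := h3
      _ ≤ preAux q A (u.reverse ++ true :: s.reverse) := h2
      _ = pre q A (s ++ [true] ++ u) := by rw [pre, this]
  have h4 : ∀ s : List Bool, pre q A (s ++ [false]) = pre q A s := by
    intro s; simp [pre, preAux]
  exact ⟨h1, fun s _ u => h1 s u, fun s hs => absurd (h4 s) hs, h4⟩
end

section
/- Let A : List Bool → ℝ be a right-consistent pricing algorithm and let q ∈ ℝ satisfy q ≤ A(s) for every history s. Then the transformed algorithm B := pre(q, A) never decreases its offered prices along any path: for all histories s and all continuations u, B(s ++ u) ≥ B(s). -/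
lemma preAux_le (A : List Bool → ℝ) (hA : RightConsistent A)
    (q : ℝ) (hq : ∀ s : List Bool, q ≤ A s) :
    ∀ t u : List Bool, preAux q A t ≤ A (t.reverse ++ u) := by
  intro t
  induction t with
  | nil => intro u; simpa [preAux] using hq u
  | cons b rest ih =>
    intro u
    cases b with
    | true =>
      simpa [preAux] using hA rest.reverse u
    | false =>
      have := ih ([false] ++ u)
      simpa [preAux, List.append_assoc] using this

lemma preAux_mono (A : List Bool → ℝ) (hA : RightConsistent A)
    (q : ℝ) (hq : ∀ s : List Bool, q ≤ A s) :
    ∀ l t : List Bool, preAux q A t ≤ preAux q A (l ++ t) := by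
  intro l
  induction l with
  | nil => intro t; simp
  | cons b rest ih =>
    intro t
    cases b with
    | true =>
      calc preAux q A t ≤ preAux q A (rest ++ t) := ih t
        _ ≤ A (rest ++ t).reverse := by
            simpa using preAux_le A hA q hq (rest ++ t) []
        _ = preAux q A (true :: (rest ++ t)) := by simp [preAux]
    | false =>
      calc preAux q A t ≤ preAux q A (rest ++ t) := ih t
        _ = preAux q A (false :: (rest ++ t)) := by simp [preAux]

/-- If `A` is right-consistent and `q ≤ A s` for every history
`s`, then the transformed algorithm `pre q A` never decreases its offered prices
along any path: `pre q A (s ++ u) ≥ pre q A s` for all `s, u`. -/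
theorem stmt_18 (A : List Bool → ℝ) (hA : RightConsistent A)
    (q : ℝ) (hq : ∀ s : List Bool, q ≤ A s) :
    ∀ s u : List Bool, pre q A (s ++ u) ≥ pre q A s := by
  intro s u
  unfold pre
  rw [List.reverse_append]
  exact preAux_mono A hA q hq u.reverse s.reverse
end
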